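/- With n = m·r, m = n^{1/(2p)}, group-based matching of 2n points in [0,B_1]×...×[0,B_p] ⊂ ℝ^p (sorted and grouped coordinatewise as in the suboptimal matching algorithm) yields, for each coordinate j, ∑_{matched pairs} (x_{i,j} - x_{i',j})^2 ≤ r B_j^2, and hence (1/n) ∑_{j=1}^p ∑_{pairs} (x_{i,j} - x_{i',j})^2 ≤ (1/m) ∑_{j=1}^p B_j^2 = n^{-1/(2p)} ∑_{j=1}^p B_j^2, which tends to 0 as n → ∞. -/

import Mathlib

/-!
Matched points lie in a common group `g`, so in coordinate `j` each matched pair contributes at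
most `d g j ^ 2`. Every group of `2 r` points is covered by exactly `r` pairs, hence the total
is at most `r ∑_g d g j ^ 2 ≤ r (∑_g d g j) ^ 2 ≤ r B_j ^ 2`. Dividing by `n = m r` leaves the
factor `1 / m = n ^ (-1 / (2 p))`, which tends to `0`.
-/

open Filter Finset

section Pairing

variable {ι α β : Type*} [Fintype ι] [DecidableEq β]

theorem two_mul_card_filter_pair_eq [Fintype α] (π : ι → α × α) (G : α → β)
    (hgroup : ∀ k, G (π k).1 = G (π k).2)
    (hbij : Function.Bijective (fun z : ι × Bool => if z.2 then (π z.1).1 else (π z.1).2))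
    (g : β) :
    2 * #{k | G (π k).1 = g} = #{i | G i = g} := by
  have hfiber : #{z : ι × Bool | G (if z.2 then (π z.1).1 else (π z.1).2) = g}
      = #{i | G i = g} :=
    card_equiv (Equiv.ofBijective _ hbij) fun z => by simp
  have hprod : ({z : ι × Bool | G (if z.2 then (π z.1).1 else (π z.1).2) = g} : Finset _)
      = ({k | G (π k).1 = g} : Finset ι) ×ˢ (univ : Finset Bool) := by
    ext ⟨k, b⟩
    cases b <;> simp [hgroup k]
  rw [← hfiber, hprod, card_product, card_univ, Fintype.card_bool, mul_comm]

theorem sum_sq_sub_le_mul_sq_sum [Fintype β] (y : α → ℝ) (π : ι → α × α) (G : α → β)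
    (d : β → ℝ) (r : ℕ) (hd : ∀ g, 0 ≤ d g)
    (hsame : ∀ k, |y (π k).1 - y (π k).2| ≤ d (G (π k).1))
    (hcard : ∀ g, #{k | G (π k).1 = g} ≤ r) :
    ∑ k, (y (π k).1 - y (π k).2) ^ 2 ≤ r * (∑ g, d g) ^ 2 :=
  calc ∑ k, (y (π k).1 - y (π k).2) ^ 2
      = ∑ g, ∑ k with G (π k).1 = g, (y (π k).1 - y (π k).2) ^ 2 :=
        (sum_fiberwise _ _ _).symm
    _ ≤ ∑ g, ∑ k with G (π k).1 = g, d g ^ 2 := by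
        refine sum_le_sum fun g _ => sum_le_sum fun k hk => ?_
        rw [← sq_abs, ← (mem_filter.mp hk).2]
        exact pow_le_pow_left₀ (abs_nonneg _) (hsame k) 2
    _ ≤ ∑ g, r * d g ^ 2 := by
        gcongr with g
        rw [sum_const, nsmul_eq_mul]
        exact mul_le_mul_of_nonneg_right (by exact_mod_cast hcard g) (sq_nonneg _)
    _ ≤ r * (∑ g, d g) ^ 2 := by
        rw [← mul_sum]
        gcongr
        exact sum_sq_le_sq_sum_of_nonneg fun g _ => hd g

end Pairing

theorem one_div_mul_le_one_div_mul_of_le_mul {S T : ℝ} {m r : ℕ} (hT : 0 ≤ T)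
    (h : S ≤ r * T) : 1 / ((m * r : ℕ) : ℝ) * S ≤ 1 / m * T := by
  by_cases hmr : m * r = 0
  · rw [hmr, Nat.cast_zero, div_zero, zero_mul]
    positivity
  obtain ⟨hm, hr⟩ := mul_ne_zero_iff.mp hmr
  calc 1 / ((m * r : ℕ) : ℝ) * S ≤ 1 / ((m * r : ℕ) : ℝ) * (r * T) := by gcongr
    _ = 1 / m * T := by push_cast; field_simp

theorem stmt_16_general (p m r n : ℕ) (hp : 0 < p) (hn : n = m * r)
    (hm : (m : ℝ) = (n : ℝ) ^ ((1 : ℝ) / (2 * (p : ℝ))))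
    (B : Fin p → ℝ) (x : Fin (2 * n) → Fin p → ℝ)
    (G : Fin (2 * n) → Fin m)
    (hcard : ∀ g, (Finset.univ.filter (fun i => G i = g)).card = 2 * r)
    (d : Fin m → Fin p → ℝ) (hd : ∀ g j, 0 ≤ d g j)
    (hdB : ∀ j, ∑ g, d g j ≤ B j)
    (hsame : ∀ i i' j, G i = G i' → |x i j - x i' j| ≤ d (G i) j)
    (π : Fin n → Fin (2 * n) × Fin (2 * n))
    (hgroup : ∀ k, G (π k).1 = G (π k).2)
    (hbij : Function.Bijective
      (fun z : Fin n × Bool => if z.2 then (π z.1).1 else (π z.1).2)) :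
    (∀ j, ∑ k, (x (π k).1 j - x (π k).2 j) ^ 2 ≤ r * (B j) ^ 2)
    ∧ (1 / (n : ℝ)) * ∑ j, ∑ k, (x (π k).1 j - x (π k).2 j) ^ 2 ≤ (1 / (m : ℝ)) * ∑ j, (B j) ^ 2
    ∧ (1 / (m : ℝ)) * ∑ j, (B j) ^ 2 = (n : ℝ) ^ (-(1 : ℝ) / (2 * (p : ℝ))) * ∑ j, (B j) ^ 2
    ∧ Tendsto (fun N : ℕ => (N : ℝ) ^ (-(1 : ℝ) / (2 * (p : ℝ))) * ∑ j, (B j) ^ 2)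
        atTop (nhds 0) := by
  have hpairs : ∀ g, #{k | G (π k).1 = g} ≤ r := fun g => by
    have := two_mul_card_filter_pair_eq π G hgroup hbij g
    have := hcard g
    omega
  have hcoord : ∀ j, ∑ k, (x (π k).1 j - x (π k).2 j) ^ 2 ≤ r * (B j) ^ 2 := fun j =>
    (sum_sq_sub_le_mul_sq_sum (x · j) π G (d · j) r (hd · j)
      (fun k => hsame _ _ j (hgroup k)) hpairs).trans <| by
      gcongr
      · exact sum_nonneg fun g _ => hd g j
      · exact hdB j
  have hexp : (0 : ℝ) < 1 / (2 * p) := by positivity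
  refine ⟨hcoord, ?_, ?_, ?_⟩
  · subst hn
    refine one_div_mul_le_one_div_mul_of_le_mul (by positivity) ?_
    rw [mul_sum]
    exact sum_le_sum fun j _ => hcoord j
  · rw [neg_div, Real.rpow_neg (Nat.cast_nonneg n), ← hm, one_div]
  · simpa [neg_div] using
      ((tendsto_rpow_neg_atTop hexp).comp tendsto_natCast_atTop_atTop).mul_const
        (∑ j, B j ^ 2)

theorem stmt_16 (p m r n : ℕ) (hp : 0 < p) (hn : n = m * r) (hr : 0 < r)
    (hm : (m : ℝ) = (n : ℝ) ^ ((1 : ℝ) / (2 * (p : ℝ))))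
    (B : Fin p → ℝ) (x : Fin (2 * n) → Fin p → ℝ)
    (hx : ∀ i j, x i j ∈ Set.Icc 0 (B j))
    (G : Fin (2 * n) → Fin m)
    (hcard : ∀ g, (Finset.univ.filter (fun i => G i = g)).card = 2 * r)
    (d : Fin m → Fin p → ℝ) (hd : ∀ g j, 0 ≤ d g j)
    (hdB : ∀ j, ∑ g, d g j ≤ B j)
    (hsame : ∀ i i' j, G i = G i' → |x i j - x i' j| ≤ d (G i) j)
    (π : Fin n → Fin (2 * n) × Fin (2 * n))
    (hgroup : ∀ k, G (π k).1 = G (π k).2)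
    (hbij : Function.Bijective
      (fun z : Fin n × Bool => if z.2 then (π z.1).1 else (π z.1).2)) :
    (∀ j, ∑ k, (x (π k).1 j - x (π k).2 j) ^ 2 ≤ r * (B j) ^ 2)
    ∧ (1 / (n : ℝ)) * ∑ j, ∑ k, (x (π k).1 j - x (π k).2 j) ^ 2 ≤ (1 / (m : ℝ)) * ∑ j, (B j) ^ 2
    ∧ (1 / (m : ℝ)) * ∑ j, (B j) ^ 2 = (n : ℝ) ^ (-(1 : ℝ) / (2 * (p : ℝ))) * ∑ j, (B j) ^ 2
    ∧ Tendsto (fun N : ℕ => (N : ℝ) ^ (-(1 : ℝ) / (2 * (p : ℝ))) * ∑ j, (B j) ^ 2)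
        atTop (nhds 0) :=
  stmt_16_general p m r n hp hn hm B x G hcard d hd hdB hsame π hgroup hbij
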